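/- arXiv:1906.00419 — 6 statements merged into one kernel-verified Lean document; each statement's English description precedes it below -/
import Mathlib

section
/- With the setup below, one has √k > v₁/v₂ = L/(3λ(L − H)) and √k > 0.2432. -/
open Real in
lemma log_18_1_lt : Real.log 18.1 < 2.8962 := by
  rw [show (2.8962 : ℝ) = 1 + 1 + 0.8962 by norm_num]
  have h1 : (2.7182818283 : ℝ) < Real.exp 1 := Real.exp_one_gt_d9
  have h2 : (2.4501 : ℝ) ≤ Real.exp 0.8962 := by
    have := Real.sum_le_exp_of_nonneg (x := 0.8962) (by norm_num) 8
    refine le_trans ?_ this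
    simp only [Finset.sum_range_succ, Finset.sum_range_zero]
    norm_num [Nat.factorial]
  have h3 : (18.1 : ℝ) < Real.exp (1 + 1 + 0.8962) := by
    rw [Real.exp_add, Real.exp_add]
    nlinarith [Real.exp_pos (0.8962 : ℝ)]
  have h4 : Real.log 18.1 < Real.log (Real.exp (1 + 1 + 0.8962)) :=
    Real.log_lt_log (by norm_num) h3
  rwa [Real.log_exp] at h4

set_option maxHeartbeats 2000000 in
theorem sqrt_k_lower_bound
    (h a₂ : ℝ) (hh : 17 ≤ h) (ha₂ : 9.05 * Real.pi ≤ a₂)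
    (σ lam a₁ H L₀ L v₀ v₁ v₂ k : ℝ)
    (hσ : σ = (1 + 2 * 0.59 - 0.59 ^ 2) / 2)
    (hlam : lam = σ * Real.log 18.1)
    (ha₁ : a₁ = 9.05 * Real.pi)
    (hH : H = h / lam + 1 / σ)
    (hL₀ : L₀ = H + Real.sqrt (H ^ 2 + 1 / 4))
    (hL : L = (⌊L₀⌋ : ℝ) + 1 / 2)
    (hv₀ : v₀ = 1 / (4 * a₁) + 4 / (3 * a₂) + L / (12 * a₁))
    (hv₁ : v₁ = L / 3)
    (hv₂ : v₂ = lam * (L - H))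
    (hk : 0 < k)
    (hsqrtk : Real.sqrt k = (v₁ + Real.sqrt (v₁ ^ 2 + 4 * v₀ * v₂)) / (2 * v₂)) :
    Real.sqrt k > v₁ / v₂ ∧ v₁ / v₂ = L / (3 * lam * (L - H)) ∧ Real.sqrt k > 0.2432 := by
  have hσv : σ = 0.91595 := by rw [hσ]; norm_num
  have hlogpos : 0 < Real.log 18.1 := Real.log_pos (by norm_num)
  have hlampos : 0 < lam := by rw [hlam, hσv]; positivity
  have hlamub : lam ≤ 2.6528 := by
    rw [hlam, hσv]; nlinarith [log_18_1_lt]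
  -- lower bound on H
  have hHlb : (7.5 : ℝ) ≤ H := by
    rw [hH, hσv]
    have h1 : (17 : ℝ) / lam ≤ h / lam := by gcongr
    have h2 : (17 : ℝ) / 2.6528 ≤ 17 / lam :=
      div_le_div_of_nonneg_left (by norm_num) hlampos hlamub
    have h3 : (7.5 : ℝ) ≤ 17 / 2.6528 + 1 / 0.91595 := by norm_num
    linarith
  have hHpos : 0 < H := by linarith
  -- sqrt bounds
  have hsq_lb : H ≤ Real.sqrt (H ^ 2 + 1 / 4) := by
    exact Real.le_sqrt_of_sq_le (by nlinarith)
  have hsq_ub : Real.sqrt (H ^ 2 + 1 / 4) ≤ H + 1 / 60 := by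
    have := Real.sqrt_le_sqrt (show H ^ 2 + 1 / 4 ≤ (H + 1 / 60) ^ 2 by nlinarith)
    rwa [Real.sqrt_sq (by positivity)] at this
  -- floor bounds
  have hfl1 : (⌊L₀⌋ : ℝ) ≤ L₀ := Int.floor_le L₀
  have hfl2 : L₀ - 1 < (⌊L₀⌋ : ℝ) := Int.sub_one_lt_floor L₀
  have hL₀ub : L₀ ≤ 2 * H + 1 / 60 := by rw [hL₀]; linarith
  have hL₀lb : 2 * H ≤ L₀ := by rw [hL₀]; linarith
  have hLub : L ≤ 2 * H + 1 / 2 + 1 / 60 := by rw [hL]; linarith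
  have hLlb : 2 * H - 1 / 2 < L := by rw [hL]; linarith
  have hLH : H < L := by linarith
  have hLpos : 0 < L := by linarith
  have hv₂pos : 0 < v₂ := by rw [hv₂]; exact mul_pos hlampos (by linarith)
  have ha₁pos : 0 < a₁ := by rw [ha₁]; positivity
  have ha₂pos : 0 < a₂ := lt_of_lt_of_le (by rw [← ha₁]; exact ha₁pos) ha₂
  have hv₀pos : 0 < v₀ := by rw [hv₀]; positivity
  have hv₁pos : 0 < v₁ := by rw [hv₁]; positivity
  -- part 1
  have hsqX : v₁ < Real.sqrt (v₁ ^ 2 + 4 * v₀ * v₂) := by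
    have h4 : (0 : ℝ) < 4 * v₀ * v₂ := by positivity
    exact Real.lt_sqrt_of_sq_lt (by linarith)
  have h2v : (0 : ℝ) < 2 * v₂ := by linarith
  have part1 : Real.sqrt k > v₁ / v₂ := by
    rw [hsqrtk, show v₁ / v₂ = (v₁ + v₁) / (2 * v₂) by field_simp; ring]
    gcongr
  -- part 2
  have hne : lam * (L - H) ≠ 0 := by rw [← hv₂]; exact hv₂pos.ne'
  have hLH0 : (0 : ℝ) < L - H := by linarith
  have hne3 : (3 : ℝ) * lam * (L - H) ≠ 0 := by positivity
  have part2 : v₁ / v₂ = L / (3 * lam * (L - H)) := by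
    rw [hv₁, hv₂, div_eq_div_iff hne hne3]
    ring
  -- part 3
  have key : 0.7296 * lam * (L - H) ≤ L := by
    have h1 : 0.7296 * lam * (L - H) ≤ 0.7296 * 2.6528 * (L - H) := by
      apply mul_le_mul_of_nonneg_right (by linarith) (by linarith)
    have h2 : 0.7296 * 2.6528 * (L - H) ≤ L := by linarith
    linarith
  have h3 : (0.2432 : ℝ) ≤ v₁ / v₂ := by
    rw [le_div_iff₀ hv₂pos, hv₁, hv₂]
    linarith [key]
  exact ⟨part1, part2, lt_of_le_of_lt h3 part1⟩
end

section
/- With the setup below, one has √k < 0.279. -/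
lemma log181_lb : (2.895911 : ℝ) < Real.log 18.1 := by
  have h2 := Real.log_two_gt_d9
  have hx : |(-0.13125 : ℝ)| < 1 := by rw [abs_of_nonpos] <;> norm_num
  have ht := Real.abs_log_sub_add_sum_range_le hx 6
  rw [abs_le] at ht
  obtain ⟨ht1, ht2⟩ := ht
  have hsum : (∑ i ∈ Finset.range 6, (-0.13125 : ℝ) ^ (i + 1) / (i + 1)) =
      -0.13125 + 0.13125^2/2 - 0.13125^3/3 + 0.13125^4/4 - 0.13125^5/5 + 0.13125^6/6 := by
    simp [Finset.sum_range_succ]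
    norm_num
  have h18 : Real.log 18.1 = 4 * Real.log 2 + Real.log (1 - (-0.13125)) := by
    rw [show ((1:ℝ) - (-0.13125)) = 1.13125 by norm_num,
        show (18.1 : ℝ) = 2 ^ (4:ℕ) * 1.13125 by norm_num,
        Real.log_mul (by norm_num) (by norm_num), Real.log_pow]
    norm_num
  have habs : |(-0.13125 : ℝ)| = 0.13125 := by
    rw [abs_of_nonpos] <;> norm_num
  rw [hsum, habs] at ht1 ht2
  norm_num at ht1 ht2
  rw [h18]
  norm_num at ht1 ht2 ⊢
  linarith [ht1, ht2, h2]

lemma log181_ub : Real.log 18.1 < 2.8959127 := by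
  have h2 := Real.log_two_lt_d9
  have hx : |(-0.13125 : ℝ)| < 1 := by rw [abs_of_nonpos] <;> norm_num
  have ht := Real.abs_log_sub_add_sum_range_le hx 6
  rw [abs_le] at ht
  obtain ⟨ht1, ht2⟩ := ht
  have hsum : (∑ i ∈ Finset.range 6, (-0.13125 : ℝ) ^ (i + 1) / (i + 1)) =
      -0.13125 + 0.13125^2/2 - 0.13125^3/3 + 0.13125^4/4 - 0.13125^5/5 + 0.13125^6/6 := by
    simp [Finset.sum_range_succ]
    norm_num
  have h18 : Real.log 18.1 = 4 * Real.log 2 + Real.log (1 - (-0.13125)) := by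
    rw [show ((1:ℝ) - (-0.13125)) = 1.13125 by norm_num,
        show (18.1 : ℝ) = 2 ^ (4:ℕ) * 1.13125 by norm_num,
        Real.log_mul (by norm_num) (by norm_num), Real.log_pow]
    norm_num
  have habs : |(-0.13125 : ℝ)| = 0.13125 := by
    rw [abs_of_nonpos] <;> norm_num
  rw [hsum, habs] at ht1 ht2
  norm_num at ht1 ht2
  rw [h18]
  norm_num at ht1 ht2 ⊢
  linarith [ht1, ht2, h2]

set_option maxHeartbeats 1000000 in
lemma aux_quad (v₀ v₁ v₂ : ℝ) (hv₂0 : 0 < v₂) (key : v₀ + 0.279 * v₁ < 0.077841 * v₂) :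
    v₁ ^ 2 + 4 * v₀ * v₂ < (2 * 0.279 * v₂ - v₁) ^ 2 := by
  nlinarith [mul_pos hv₂0 (show (0:ℝ) < 0.077841 * v₂ - 0.279 * v₁ - v₀ by linarith)]

lemma aux_Mt (H t : ℝ) (hH7 : 7.5005 ≤ H) (ht : t * (8 * H + 1) = 1) (ht0 : 0 < t) :
    (0.1112 : ℝ) ≤ 0.0146 * H + 0.1105 * t := by
  nlinarith [ht, hH7, sq_nonneg (H - 7.5005), ht0]

lemma aux_sq (H t : ℝ) (hH7 : 7.5005 ≤ H) (ht : t * (8 * H + 1) = 1) (ht0 : 0 < t) :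
    (H + t) ^ 2 ≤ H ^ 2 + 1 / 4 := by
  have ht4 : 4 * t ≤ 1 := by
    nlinarith [ht, mul_nonneg ht0.le (show (0:ℝ) ≤ H - 7.5005 by linarith)]
  nlinarith [ht, mul_nonneg ht0.le (show (0:ℝ) ≤ 1 - 4 * t by linarith)]

set_option maxHeartbeats 1000000 in
theorem sqrt_k_upper_bound
    (h a₂ : ℝ) (hh : 17 ≤ h) (ha₂ : 9.05 * Real.pi ≤ a₂)
    (σ lam a₁ H L₀ L v₀ v₁ v₂ k : ℝ)
    (hσ : σ = (1 + 2 * 0.59 - 0.59 ^ 2) / 2)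
    (hlam : lam = σ * Real.log 18.1)
    (ha₁ : a₁ = 9.05 * Real.pi)
    (hH : H = h / lam + 1 / σ)
    (hL₀ : L₀ = H + Real.sqrt (H ^ 2 + 1 / 4))
    (hL : L = (⌊L₀⌋ : ℝ) + 1 / 2)
    (hv₀ : v₀ = 1 / (4 * a₁) + 4 / (3 * a₂) + L / (12 * a₁))
    (hv₁ : v₁ = L / 3)
    (hv₂ : v₂ = lam * (L - H))
    (hk : 0 < k)
    (hsqrtk : Real.sqrt k = (v₁ + Real.sqrt (v₁ ^ 2 + 4 * v₀ * v₂)) / (2 * v₂)) :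
    Real.sqrt k < 0.279 := by
  have hσ' : σ = 0.91595 := by rw [hσ]; norm_num
  -- lambda bounds
  have hlam_l : (2.6525096 : ℝ) ≤ lam := by
    rw [hlam, hσ']; nlinarith [log181_lb]
  have hlam_u : lam ≤ 2.6525113 := by
    rw [hlam, hσ']; nlinarith [log181_ub]
  have hlam0 : (0:ℝ) < lam := by linarith
  -- a₁ bounds
  have ha₁l : (28.4314076 : ℝ) ≤ a₁ := by
    rw [ha₁]; nlinarith [Real.pi_gt_d6]
  have ha₁u : a₁ ≤ 28.4314167 := by
    rw [ha₁]; nlinarith [Real.pi_lt_d6]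
  have ha₁0 : (0:ℝ) < a₁ := by linarith
  have ha₂l : (28.4314076 : ℝ) ≤ a₂ := by rw [ha₁] at ha₁l; linarith
  have ha₂0 : (0:ℝ) < a₂ := by linarith
  -- H lower bound
  have hHdiv : (6.409 : ℝ) ≤ h / lam := by
    rw [le_div_iff₀ hlam0]; nlinarith
  have hH7 : (7.5005 : ℝ) ≤ H := by
    have hs : (1.0917626 : ℝ) ≤ 1 / σ := by
      rw [hσ', le_div_iff₀ (by norm_num : (0:ℝ) < 0.91595)]; norm_num
    rw [hH]; linarith
  have hH0 : (0:ℝ) ≤ H := by linarith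
  -- t = 1/(8H+1)
  have h8 : (0:ℝ) < 8 * H + 1 := by linarith
  obtain ⟨t, htdef⟩ : ∃ t : ℝ, t = 1 / (8 * H + 1) := ⟨_, rfl⟩
  have ht0 : (0:ℝ) < t := by rw [htdef]; positivity
  have ht : t * (8 * H + 1) = 1 := by
    rw [htdef]; field_simp
  -- sqrt(H^2+1/4) ≥ H + t
  have hsq : H + t ≤ Real.sqrt (H ^ 2 + 1 / 4) := by
    rw [Real.le_sqrt (by linarith) (by positivity)]
    exact aux_sq H t hH7 ht ht0
  -- L lower bound
  have hfl : L₀ - 1 < (⌊L₀⌋ : ℝ) := Int.sub_one_lt_floor L₀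
  have hL₀2 : 2 * H + t ≤ L₀ := by rw [hL₀]; linarith [hsq]
  have hL2 : 2 * H + t - 1/2 ≤ L := by rw [hL]; linarith [hfl, hL₀2]
  have hLpos : (0:ℝ) < L := by linarith
  -- division bounds
  have hA : 1 / (4 * a₁) ≤ 0.0087931 := by
    rw [div_le_iff₀ (by positivity)]; nlinarith
  have hB : 4 / (3 * a₂) ≤ 0.0468965 := by
    rw [div_le_iff₀ (by positivity)]; nlinarith
  have hd_u : 1 / (12 * a₁) ≤ 0.0029311 := by
    rw [div_le_iff₀ (by positivity)]; nlinarith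
  have hd_l : (0.0029310 : ℝ) ≤ 1 / (12 * a₁) := by
    rw [le_div_iff₀ (by positivity)]; nlinarith
  -- hMt : 0.0146*H + 0.1105*t ≥ 0.1112
  have hMt : (0.1112 : ℝ) ≤ 0.0146 * H + 0.1105 * t := aux_Mt H t hH7 ht ht0
  -- key coefficients
  have hM : (0.0146 : ℝ) ≤ 0.077841 * lam - 0.186 - 2 * (1 / (12 * a₁)) := by
    nlinarith
  have hp1l : (0.1105 : ℝ) ≤ 0.077841 * lam - 0.093 - 1 / (12 * a₁) := by
    nlinarith
  have hp1u : 0.077841 * lam - 0.093 - 1 / (12 * a₁) ≤ 0.110546 := by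
    nlinarith
  have prod1 : 0.0146 * H ≤ (0.077841 * lam - 0.186 - 2 * (1 / (12 * a₁))) * H :=
    mul_le_mul_of_nonneg_right hM hH0
  have prod2 : 0.1105 * t ≤ (0.077841 * lam - 0.093 - 1 / (12 * a₁)) * t :=
    mul_le_mul_of_nonneg_right hp1l ht0.le
  have hQ1 : (0.077841 * lam - 0.093 - 1 / (12 * a₁)) * (2 * H + t - 1/2) ≤
      (0.077841 * lam - 0.093 - 1 / (12 * a₁)) * L :=
    mul_le_mul_of_nonneg_left hL2 (by linarith)
  -- the key quadratic inequality
  have key : v₀ + 0.279 * v₁ < 0.077841 * v₂ := by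
    rw [hv₀, hv₁, hv₂]
    have hexp : L / (12 * a₁) = (1 / (12 * a₁)) * L := by ring
    rw [hexp]
    linarith [prod1, prod2, hQ1, hMt, hA, hB, hp1u]
  -- positivity of v's
  have hv₂0 : (0:ℝ) < v₂ := by
    rw [hv₂]; have : (0:ℝ) < L - H := by linarith
    positivity
  have hv₀0 : (0:ℝ) < v₀ := by rw [hv₀]; positivity
  have hv₁0 : (0:ℝ) < v₁ := by rw [hv₁]; positivity
  -- conclude
  have h2c : v₁ < 0.279 * v₂ := by linarith [key, hv₀0]
  have hD2 : (0:ℝ) ≤ v₁ ^ 2 + 4 * v₀ * v₂ := by positivity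
  have hDlt : Real.sqrt (v₁ ^ 2 + 4 * v₀ * v₂) < 2 * 0.279 * v₂ - v₁ := by
    rw [Real.sqrt_lt' (by linarith)]
    exact aux_quad v₀ v₁ v₂ hv₂0 key
  rw [hsqrtk, div_lt_iff₀ (by linarith : (0:ℝ) < 2 * v₂)]
  linarith
end

section
/- With the setup below, one has √k·L < 0.239·h. -/
theorem log181_bounds : (2.89591:ℝ) < Real.log 18.1 ∧ Real.log 18.1 < 2.89592 := by
  have h18 : Real.log 18.1 = 4 * Real.log 2 + Real.log (1 - (-0.13125 : ℝ)) := by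
    have : (18.1:ℝ) = 2 ^ 4 * (1 - (-0.13125 : ℝ)) := by norm_num
    rw [this, Real.log_mul (by norm_num) (by norm_num), Real.log_pow]
    push_cast; ring
  have key := Real.abs_log_sub_add_sum_range_le (x := (-0.13125:ℝ)) (by rw [abs_of_nonpos] <;> norm_num) 6
  rw [abs_le] at key
  obtain ⟨k1, k2⟩ := key
  rw [Finset.sum_range_succ, Finset.sum_range_succ, Finset.sum_range_succ,
    Finset.sum_range_succ, Finset.sum_range_succ, Finset.sum_range_succ,
    Finset.sum_range_zero, abs_of_nonpos (by norm_num)] at k1 k2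
  norm_num at k1 k2
  have l1 := Real.log_two_gt_d9
  have l2 := Real.log_two_lt_d9
  constructor <;> rw [h18] <;> nlinarith [k1, k2, l1, l2]

set_option maxHeartbeats 1000000 in
theorem core_poly_ineq (h L : ℝ) (hh : 17 ≤ h)
    (hLA : (50000 / 66313 * h + 40000 / 18319 - 1 / 2) ≤ L) (hLB : L ≤ (800 / 1061 * h + 40000 / 18319 + 1 / 2 + 1 / 60)) :
    0 < 57121 / 1000000 * h ^ 2 * (1061 / 400 * L - h - 53050 / 18319)
      - 239 / 3000 * h * L ^ 2 - 1250 / 426471 * (19 * L ^ 2 + L ^ 3) := by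
  have hg1 : (0:ℝ) ≤ h - 17 := by linarith
  have hg3 : (0:ℝ) ≤ (h - 17) ^ 3 := by positivity
  have hpA : 0 < (57121 / 1000000 * h ^ 2 * (1061 / 400 * (50000 / 66313 * h + 40000 / 18319 - 1 / 2) - h - 53050 / 18319) - 239 / 3000 * h * (50000 / 66313 * h + 40000 / 18319 - 1 / 2) ^ 2 - 1250 / 426471 * (19 * (50000 / 66313 * h + 40000 / 18319 - 1 / 2) ^ 2 + (50000 / 66313 * h + 40000 / 18319 - 1 / 2) ^ 3)) := by
    linarith only [hg1, sq_nonneg (h - 17), hg3]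
  have hpB : 0 < (57121 / 1000000 * h ^ 2 * (1061 / 400 * (800 / 1061 * h + 40000 / 18319 + 1 / 2 + 1 / 60) - h - 53050 / 18319) - 239 / 3000 * h * (800 / 1061 * h + 40000 / 18319 + 1 / 2 + 1 / 60) ^ 2 - 1250 / 426471 * (19 * (800 / 1061 * h + 40000 / 18319 + 1 / 2 + 1 / 60) ^ 2 + (800 / 1061 * h + 40000 / 18319 + 1 / 2 + 1 / 60) ^ 3)) := by
    linarith only [hg1, sq_nonneg (h - 17), hg3]
  have hRS : 0 ≤ (L - (50000 / 66313 * h + 40000 / 18319 - 1 / 2)) * (((800 / 1061 * h + 40000 / 18319 + 1 / 2 + 1 / 60) - L) * (((800 / 1061 * h + 40000 / 18319 + 1 / 2 + 1 / 60) - (50000 / 66313 * h + 40000 / 18319 - 1 / 2)) *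
      (239 / 3000 * h + 19 * (1250 / 426471) + 1250 / 426471 * ((50000 / 66313 * h + 40000 / 18319 - 1 / 2) + (800 / 1061 * h + 40000 / 18319 + 1 / 2 + 1 / 60) + L)))) := by
    have c1 : (0:ℝ) ≤ L - (50000 / 66313 * h + 40000 / 18319 - 1 / 2) := by linarith
    have c2 : (0:ℝ) ≤ (800 / 1061 * h + 40000 / 18319 + 1 / 2 + 1 / 60) - L := by linarith
    have c3 : (0:ℝ) ≤ (800 / 1061 * h + 40000 / 18319 + 1 / 2 + 1 / 60) - (50000 / 66313 * h + 40000 / 18319 - 1 / 2) := by linarith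
    have c4 : (0:ℝ) ≤ 239 / 3000 * h + 19 * (1250 / 426471) + 1250 / 426471 * ((50000 / 66313 * h + 40000 / 18319 - 1 / 2) + (800 / 1061 * h + 40000 / 18319 + 1 / 2 + 1 / 60) + L) := by
      linarith
    exact mul_nonneg c1 (mul_nonneg c2 (mul_nonneg c3 c4))
  have hchord : ((800 / 1061 * h + 40000 / 18319 + 1 / 2 + 1 / 60) - (50000 / 66313 * h + 40000 / 18319 - 1 / 2)) * ((57121 / 1000000 * h ^ 2 * (1061 / 400 * L - h - 53050 / 18319) - 239 / 3000 * h * L ^ 2 - 1250 / 426471 * (19 * L ^ 2 + L ^ 3)))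
      ≥ ((800 / 1061 * h + 40000 / 18319 + 1 / 2 + 1 / 60) - L) * (57121 / 1000000 * h ^ 2 * (1061 / 400 * (50000 / 66313 * h + 40000 / 18319 - 1 / 2) - h - 53050 / 18319) - 239 / 3000 * h * (50000 / 66313 * h + 40000 / 18319 - 1 / 2) ^ 2 - 1250 / 426471 * (19 * (50000 / 66313 * h + 40000 / 18319 - 1 / 2) ^ 2 + (50000 / 66313 * h + 40000 / 18319 - 1 / 2) ^ 3)) + (L - (50000 / 66313 * h + 40000 / 18319 - 1 / 2)) * (57121 / 1000000 * h ^ 2 * (1061 / 400 * (800 / 1061 * h + 40000 / 18319 + 1 / 2 + 1 / 60) - h - 53050 / 18319) - 239 / 3000 * h * (800 / 1061 * h + 40000 / 18319 + 1 / 2 + 1 / 60) ^ 2 - 1250 / 426471 * (19 * (800 / 1061 * h + 40000 / 18319 + 1 / 2 + 1 / 60) ^ 2 + (800 / 1061 * h + 40000 / 18319 + 1 / 2 + 1 / 60) ^ 3)) := by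
    linarith only [hRS]
  by_contra hcon
  push_neg at hcon
  have hnp : ((800 / 1061 * h + 40000 / 18319 + 1 / 2 + 1 / 60) - (50000 / 66313 * h + 40000 / 18319 - 1 / 2)) * ((57121 / 1000000 * h ^ 2 * (1061 / 400 * L - h - 53050 / 18319) - 239 / 3000 * h * L ^ 2 - 1250 / 426471 * (19 * L ^ 2 + L ^ 3))) ≤ 0 :=
    mul_nonpos_iff.mpr (Or.inl ⟨by linarith, hcon⟩)
  rcases le_total L (((50000 / 66313 * h + 40000 / 18319 - 1 / 2) + (800 / 1061 * h + 40000 / 18319 + 1 / 2 + 1 / 60)) / 2) with hmid | hmid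
  · have c2 : (31:ℝ) / 120 ≤ (800 / 1061 * h + 40000 / 18319 + 1 / 2 + 1 / 60) - L := by linarith
    have t1 : 31 / 120 * (57121 / 1000000 * h ^ 2 * (1061 / 400 * (50000 / 66313 * h + 40000 / 18319 - 1 / 2) - h - 53050 / 18319) - 239 / 3000 * h * (50000 / 66313 * h + 40000 / 18319 - 1 / 2) ^ 2 - 1250 / 426471 * (19 * (50000 / 66313 * h + 40000 / 18319 - 1 / 2) ^ 2 + (50000 / 66313 * h + 40000 / 18319 - 1 / 2) ^ 3)) ≤ ((800 / 1061 * h + 40000 / 18319 + 1 / 2 + 1 / 60) - L) * (57121 / 1000000 * h ^ 2 * (1061 / 400 * (50000 / 66313 * h + 40000 / 18319 - 1 / 2) - h - 53050 / 18319) - 239 / 3000 * h * (50000 / 66313 * h + 40000 / 18319 - 1 / 2) ^ 2 - 1250 / 426471 * (19 * (50000 / 66313 * h + 40000 / 18319 - 1 / 2) ^ 2 + (50000 / 66313 * h + 40000 / 18319 - 1 / 2) ^ 3)) :=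
      mul_le_mul_of_nonneg_right c2 hpA.le
    have t2 : 0 ≤ (L - (50000 / 66313 * h + 40000 / 18319 - 1 / 2)) * (57121 / 1000000 * h ^ 2 * (1061 / 400 * (800 / 1061 * h + 40000 / 18319 + 1 / 2 + 1 / 60) - h - 53050 / 18319) - 239 / 3000 * h * (800 / 1061 * h + 40000 / 18319 + 1 / 2 + 1 / 60) ^ 2 - 1250 / 426471 * (19 * (800 / 1061 * h + 40000 / 18319 + 1 / 2 + 1 / 60) ^ 2 + (800 / 1061 * h + 40000 / 18319 + 1 / 2 + 1 / 60) ^ 3)) := mul_nonneg (by linarith) hpB.le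
    linarith only [hchord, hnp, t1, t2, hpA]
  · have c1 : (31:ℝ) / 120 ≤ L - (50000 / 66313 * h + 40000 / 18319 - 1 / 2) := by linarith
    have t1 : 31 / 120 * (57121 / 1000000 * h ^ 2 * (1061 / 400 * (800 / 1061 * h + 40000 / 18319 + 1 / 2 + 1 / 60) - h - 53050 / 18319) - 239 / 3000 * h * (800 / 1061 * h + 40000 / 18319 + 1 / 2 + 1 / 60) ^ 2 - 1250 / 426471 * (19 * (800 / 1061 * h + 40000 / 18319 + 1 / 2 + 1 / 60) ^ 2 + (800 / 1061 * h + 40000 / 18319 + 1 / 2 + 1 / 60) ^ 3)) ≤ (L - (50000 / 66313 * h + 40000 / 18319 - 1 / 2)) * (57121 / 1000000 * h ^ 2 * (1061 / 400 * (800 / 1061 * h + 40000 / 18319 + 1 / 2 + 1 / 60) - h - 53050 / 18319) - 239 / 3000 * h * (800 / 1061 * h + 40000 / 18319 + 1 / 2 + 1 / 60) ^ 2 - 1250 / 426471 * (19 * (800 / 1061 * h + 40000 / 18319 + 1 / 2 + 1 / 60) ^ 2 + (800 / 1061 * h + 40000 / 18319 + 1 / 2 + 1 / 60) ^ 3)) 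:=
      mul_le_mul_of_nonneg_right c1 hpB.le
    have t2 : 0 ≤ ((800 / 1061 * h + 40000 / 18319 + 1 / 2 + 1 / 60) - L) * (57121 / 1000000 * h ^ 2 * (1061 / 400 * (50000 / 66313 * h + 40000 / 18319 - 1 / 2) - h - 53050 / 18319) - 239 / 3000 * h * (50000 / 66313 * h + 40000 / 18319 - 1 / 2) ^ 2 - 1250 / 426471 * (19 * (50000 / 66313 * h + 40000 / 18319 - 1 / 2) ^ 2 + (50000 / 66313 * h + 40000 / 18319 - 1 / 2) ^ 3)) := mul_nonneg (by linarith) hpA.le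
    linarith only [hchord, hnp, t1, t2, hpB]

theorem root_lt_of_quad (v₀ v₁ v₂ t s : ℝ) (hv₀ : 0 < v₀) (hv₂ : 0 < v₂)
    (ht : 0 < t) (hs : 0 ≤ s)
    (hquad : v₂ * s ^ 2 - v₁ * s - v₀ = 0)
    (hts : 0 < v₂ * t ^ 2 - v₁ * t - v₀) : s < t := by
  by_contra hcon
  push_neg at hcon
  have hsp : 0 < s := lt_of_lt_of_le ht hcon
  have h5 : 0 < v₂ * s - v₁ := by
    rcases le_or_gt (v₂ * s - v₁) 0 with hle | hlt
    · exfalso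
      have hm : (v₂ * s - v₁) * s ≤ 0 := mul_nonpos_iff.mpr (Or.inr ⟨hle, hsp.le⟩)
      linarith only [hm, hquad, hv₀]
    · exact hlt
  have h6 : 0 < v₂ * (t + s) - v₁ := by
    linarith only [h5, mul_pos hv₂ ht]
  have hm : 0 ≤ (s - t) * (v₂ * (t + s) - v₁) := mul_nonneg (by linarith) h6.le
  linarith only [hm, hquad, hts]

set_option maxHeartbeats 1000000 in
theorem sqrt_k_times_L_bound
    (h a₂ : ℝ) (hh : 17 ≤ h) (ha₂ : 9.05 * Real.pi ≤ a₂)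
    (σ lam a₁ H L₀ L v₀ v₁ v₂ k : ℝ)
    (hσ : σ = (1 + 2 * 0.59 - 0.59 ^ 2) / 2)
    (hlam : lam = σ * Real.log 18.1)
    (ha₁ : a₁ = 9.05 * Real.pi)
    (hH : H = h / lam + 1 / σ)
    (hL₀ : L₀ = H + Real.sqrt (H ^ 2 + 1 / 4))
    (hL : L = (⌊L₀⌋ : ℝ) + 1 / 2)
    (hv₀ : v₀ = 1 / (4 * a₁) + 4 / (3 * a₂) + L / (12 * a₁))
    (hv₁ : v₁ = L / 3)
    (hv₂ : v₂ = lam * (L - H))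
    (hk : 0 < k)
    (hsqrtk : Real.sqrt k = (v₁ + Real.sqrt (v₁ ^ 2 + 4 * v₀ * v₂)) / (2 * v₂)) :
    Real.sqrt k * L < 0.239 * h := by
  have hσv : σ = 0.91595 := by rw [hσ]; norm_num
  obtain ⟨hlog1, hlog2⟩ := log181_bounds
  have hlam_lb : (1061:ℝ) / 400 ≤ lam := by rw [hlam, hσv]; nlinarith [hlog1]
  have hlam_ub : lam ≤ 66313 / 25000 := by rw [hlam, hσv]; nlinarith [hlog2]
  have hlam_pos : (0:ℝ) < lam := by linarith
  have hh_pos : (0:ℝ) < h := by linarith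
  have hHub : H ≤ 400 / 1061 * h + 20000 / 18319 := by
    rw [hH, hσv]
    have h1 : h / lam ≤ 400 / 1061 * h := by
      rw [div_le_iff₀ hlam_pos]
      linarith only [mul_nonneg hh_pos.le (sub_nonneg.2 hlam_lb)]
    have h2 : 1 / (0.91595:ℝ) = 20000 / 18319 := by norm_num
    linarith only [h1, h2.le, h2.ge]
  have hHlb : 25000 / 66313 * h + 20000 / 18319 ≤ H := by
    rw [hH, hσv]
    have h1 : 25000 / 66313 * h ≤ h / lam := by
      rw [le_div_iff₀ hlam_pos]
      linarith only [mul_nonneg hh_pos.le (sub_nonneg.2 hlam_ub)]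
    have h2 : 1 / (0.91595:ℝ) = 20000 / 18319 := by norm_num
    linarith only [h1, h2.le, h2.ge]
  have hH75 : (7.5:ℝ) ≤ H := by linarith
  have hH_pos : (0:ℝ) < H := by linarith
  have hs1 : H ≤ Real.sqrt (H ^ 2 + 1 / 4) := by
    have := Real.sqrt_le_sqrt (show H ^ 2 ≤ H ^ 2 + 1 / 4 by linarith)
    rwa [Real.sqrt_sq hH_pos.le] at this
  have hs2 : Real.sqrt (H ^ 2 + 1 / 4) ≤ H + 1 / (8 * H) := by
    have hid : 2 * H * (1 / (8 * H)) = 1 / 4 := by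
      field_simp
      ring
    have h1 : H ^ 2 + 1 / 4 ≤ (H + 1 / (8 * H)) ^ 2 := by
      linarith only [hid, sq_nonneg (1 / (8 * H))]
    calc Real.sqrt (H ^ 2 + 1 / 4) ≤ Real.sqrt ((H + 1 / (8 * H)) ^ 2) := Real.sqrt_le_sqrt h1
      _ = H + 1 / (8 * H) := Real.sqrt_sq (by positivity)
  have h8H : 1 / (8 * H) ≤ 1 / 60 := by
    rw [div_le_div_iff₀ (by linarith) (by norm_num)]
    linarith
  have hfl1 : (⌊L₀⌋ : ℝ) ≤ L₀ := Int.floor_le _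
  have hfl2 : L₀ < (⌊L₀⌋ : ℝ) + 1 := Int.lt_floor_add_one _
  have hL₀lb : 2 * H ≤ L₀ := by rw [hL₀]; linarith
  have hL₀ub : L₀ ≤ 2 * H + 1 / 60 := by rw [hL₀]; linarith
  have hLlb : 2 * H - 1 / 2 ≤ L := by rw [hL]; linarith
  have hLub : L ≤ 2 * H + 1 / 2 + 1 / 60 := by rw [hL]; linarith
  have hLA : 50000 / 66313 * h + 40000 / 18319 - 1 / 2 ≤ L := by linarith
  have hLB : L ≤ 800 / 1061 * h + 40000 / 18319 + 1 / 2 + 1 / 60 := by linarith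
  have hL14 : (14:ℝ) ≤ L := by linarith
  have hLH : (7:ℝ) ≤ L - H := by linarith
  have hpi := Real.pi_gt_d6
  have ha1 : (28.4314:ℝ) ≤ a₁ := by rw [ha₁]; linarith
  have ha2' : (28.4314:ℝ) ≤ a₂ := by linarith
  have ha1_pos : (0:ℝ) < a₁ := by linarith
  have ha2_pos : (0:ℝ) < a₂ := by linarith
  have hv₀ub : v₀ ≤ 1250 / 142157 + 20000 / 426471 + 1250 / 426471 * L := by
    rw [hv₀]
    have b1 : 1 / (4 * a₁) ≤ 1250 / 142157 := by
      rw [div_le_div_iff₀ (by linarith) (by norm_num)]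
      linarith
    have b2 : 4 / (3 * a₂) ≤ 20000 / 426471 := by
      rw [div_le_div_iff₀ (by linarith) (by norm_num)]
      linarith
    have b3 : L / (12 * a₁) ≤ 1250 / 426471 * L := by
      rw [div_le_iff₀ (by linarith)]
      linarith only [mul_nonneg (show (0:ℝ) ≤ L by linarith)
        (show (0:ℝ) ≤ 15000 / 426471 * a₁ - 1 by linarith)]
    linarith only [b1, b2, b3]
  have hv₀_pos : 0 < v₀ := by
    rw [hv₀]
    have t1 : 0 < 1 / (4 * a₁) := by positivity
    have t2 : 0 < 4 / (3 * a₂) := by positivity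
    have t3 : 0 ≤ L / (12 * a₁) := div_nonneg (by linarith) (by linarith)
    linarith only [t1, t2, t3]
  have hv₂_pos : 0 < v₂ := by rw [hv₂]; exact mul_pos hlam_pos (by linarith)
  have hF := core_poly_ineq h L hh hLA hLB
  have hG : 0 < v₂ * (0.239 * h) ^ 2 - v₁ * (0.239 * h) * L - v₀ * L ^ 2 := by
    have t1 : 0 ≤ h ^ 2 * ((lam - 1061 / 400) * (L - H)) :=
      mul_nonneg (sq_nonneg h) (mul_nonneg (by linarith) (by linarith))
    have t2 : 0 ≤ h ^ 2 * (400 / 1061 * h + 20000 / 18319 - H) :=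
      mul_nonneg (sq_nonneg h) (by linarith)
    have t3 : 0 ≤ (1250 / 142157 + 20000 / 426471 + 1250 / 426471 * L - v₀) * L ^ 2 :=
      mul_nonneg (by linarith) (sq_nonneg L)
    rw [hv₁, hv₂]
    linarith only [hF, t1, t2, t3]
  have hs_nonneg : 0 ≤ Real.sqrt k := Real.sqrt_nonneg k
  have hD : 0 ≤ v₁ ^ 2 + 4 * v₀ * v₂ := by
    linarith only [sq_nonneg v₁, mul_pos hv₀_pos hv₂_pos]
  have h2 : 2 * v₂ * Real.sqrt k - v₁ = Real.sqrt (v₁ ^ 2 + 4 * v₀ * v₂) := by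
    rw [hsqrtk]
    field_simp
    ring
  have h3 : (2 * v₂ * Real.sqrt k - v₁) ^ 2 = v₁ ^ 2 + 4 * v₀ * v₂ := by
    rw [h2, Real.sq_sqrt hD]
  have h4 : 4 * v₂ * (v₂ * Real.sqrt k ^ 2 - v₁ * Real.sqrt k - v₀) = 0 := by
    linear_combination h3
  have hquad : v₂ * Real.sqrt k ^ 2 - v₁ * Real.sqrt k - v₀ = 0 := by
    rcases mul_eq_zero.mp h4 with h5 | h5
    · exact absurd h5 (by positivity)
    · exact h5
  have hL_pos : (0:ℝ) < L := by linarith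
  have ht_pos : 0 < 0.239 * h / L := by positivity
  have hts : 0 < v₂ * (0.239 * h / L) ^ 2 - v₁ * (0.239 * h / L) - v₀ := by
    have heq : v₂ * (0.239 * h / L) ^ 2 - v₁ * (0.239 * h / L) - v₀
        = (v₂ * (0.239 * h) ^ 2 - v₁ * (0.239 * h) * L - v₀ * L ^ 2) / L ^ 2 := by
      field_simp
    rw [heq]
    exact div_pos hG (by positivity)
  have hst : Real.sqrt k < 0.239 * h / L :=
    root_lt_of_quad v₀ v₁ v₂ _ _ hv₀_pos hv₂_pos ht_pos hs_nonneg hquad hts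
  calc Real.sqrt k * L < 0.239 * h / L * L := mul_lt_mul_of_pos_right hst hL_pos
    _ = 0.239 * h := by field_simp
end

section
/- With the setup below, one has g·L·(R·a₁ + S·a₂) < (√k/3 + 1/(12a₁))·a₁·a₂·L² + ((4/3)·a₁ + a₂/4)·L. -/
set_option maxHeartbeats 1600000 in
theorem g_L_bound
    (h a₂ : ℝ) (hh : 17 ≤ h) (ha₂ : 9.05 * Real.pi ≤ a₂)
    (σ lam a₁ H L₀ L v₀ v₁ v₂ k : ℝ)
    (hσ : σ = (1 + 2 * 0.59 - 0.59 ^ 2) / 2)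
    (hlam : lam = σ * Real.log 18.1)
    (ha₁ : a₁ = 9.05 * Real.pi)
    (hH : H = h / lam + 1 / σ)
    (hL₀ : L₀ = H + Real.sqrt (H ^ 2 + 1 / 4))
    (hL : L = (⌊L₀⌋ : ℝ) + 1 / 2)
    (hv₀ : v₀ = 1 / (4 * a₁) + 4 / (3 * a₂) + L / (12 * a₁))
    (hv₁ : v₁ = L / 3)
    (hv₂ : v₂ = lam * (L - H))
    (hk : 0 < k)
    (hsqrtk : Real.sqrt k = (v₁ + Real.sqrt (v₁ ^ 2 + 4 * v₀ * v₂)) / (2 * v₂))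
    (K : ℕ) (hK : (K : ℤ) = 1 + ⌊k * L * a₁ * a₂⌋)
    (R₁ S₁ R₂ S₂ : ℕ) (hR₁ : R₁ = 4)
    (hS₁ : (S₁ : ℤ) = ⌊(L + 3) / 4⌋)
    (hR₂ : (R₂ : ℤ) = 1 + ⌊Real.sqrt (((K : ℝ) - 1) * L * a₂ / a₁)⌋)
    (hS₂ : (S₂ : ℤ) = 1 + ⌊Real.sqrt (((K : ℝ) - 1) * L * a₁ / a₂)⌋)
    (R S : ℕ) (hR : R = R₁ + R₂ - 1) (hS : S = S₁ + S₂ - 1)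
    (N g : ℝ) (hN : N = (K : ℝ) * L) (hg : g = 1 / 4 - N / (12 * (R : ℝ) * S)) :
    g * L * ((R : ℝ) * a₁ + (S : ℝ) * a₂) <
      (Real.sqrt k / 3 + 1 / (12 * a₁)) * a₁ * a₂ * L ^ 2 + (4 / 3 * a₁ + a₂ / 4) * L := by
  have hpi : (0:ℝ) < Real.pi := Real.pi_pos
  have ha₁pos : 0 < a₁ := by rw [ha₁]; positivity
  have ha₂pos : 0 < a₂ := lt_of_lt_of_le (ha₁ ▸ ha₁pos) ha₂
  have hσpos : 0 < σ := by rw [hσ]; norm_num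
  have hσle : σ ≤ 1 := by rw [hσ]; norm_num
  have hlampos : 0 < lam := by
    rw [hlam]
    exact mul_pos hσpos (Real.log_pos (by norm_num))
  have hHge : 1 ≤ H := by
    rw [hH]
    have h1 : 0 ≤ h / lam := div_nonneg (by linarith) hlampos.le
    have h2 : 1 ≤ 1 / σ := by rw [le_div_iff₀ hσpos]; linarith
    linarith
  have hL₀ge : 2 ≤ L₀ := by
    rw [hL₀]
    have hs : H ≤ Real.sqrt (H ^ 2 + 1 / 4) := by
      have := Real.sqrt_le_sqrt (show H ^ 2 ≤ H ^ 2 + 1 / 4 by linarith)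
      rwa [Real.sqrt_sq (by linarith)] at this
    linarith
  have hLge : (2:ℝ) ≤ L := by
    rw [hL]
    have h1 : (2:ℤ) ≤ ⌊L₀⌋ := Int.le_floor.mpr (by exact_mod_cast hL₀ge)
    have h2 : (2:ℝ) ≤ (⌊L₀⌋ : ℝ) := by exact_mod_cast h1
    linarith
  have hLpos : 0 < L := by linarith
  -- K facts
  have hkL : 0 < k * L * a₁ * a₂ := by positivity
  have hfl0 : (0:ℤ) ≤ ⌊k * L * a₁ * a₂⌋ := Int.floor_nonneg.mpr hkL.le
  have hKR : ((K:ℝ) - 1) = (⌊k * L * a₁ * a₂⌋ : ℝ) := by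
    have h1 : ((K:ℤ) : ℝ) = ((1 + ⌊k * L * a₁ * a₂⌋ : ℤ) : ℝ) := by rw [hK]
    push_cast at h1
    linarith
  have hKle : ((K:ℝ) - 1) ≤ k * L * a₁ * a₂ := by rw [hKR]; exact Int.floor_le _
  have hKnn : 0 ≤ (K:ℝ) - 1 := by rw [hKR]; exact_mod_cast hfl0
  -- t
  obtain ⟨t, htdef⟩ : ∃ t, t = Real.sqrt (((K:ℝ) - 1) * L * a₂ * a₁) := ⟨_, rfl⟩
  have hcnn : 0 ≤ ((K:ℝ) - 1) * L * a₂ * a₁ :=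
    mul_nonneg (mul_nonneg (mul_nonneg hKnn hLpos.le) ha₂pos.le) ha₁pos.le
  have ht2 : t ^ 2 = ((K:ℝ) - 1) * L * a₂ * a₁ := by rw [htdef]; exact Real.sq_sqrt hcnn
  have ht0 : 0 ≤ t := by rw [htdef]; exact Real.sqrt_nonneg _
  have e1 : t = Real.sqrt (((K:ℝ) - 1) * L * a₂ / a₁) * a₁ := by
    rw [htdef, show ((K:ℝ) - 1) * L * a₂ * a₁ = (((K:ℝ) - 1) * L * a₂ / a₁) * a₁ ^ 2 by
      field_simp]
    rw [Real.sqrt_mul (by positivity) , Real.sqrt_sq ha₁pos.le]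
  have e2 : t = Real.sqrt (((K:ℝ) - 1) * L * a₁ / a₂) * a₂ := by
    rw [htdef, show ((K:ℝ) - 1) * L * a₂ * a₁ = (((K:ℝ) - 1) * L * a₁ / a₂) * a₂ ^ 2 by
      field_simp]
    rw [Real.sqrt_mul (by positivity) , Real.sqrt_sq ha₂pos.le]
  -- natural number facts
  have hR₂1 : 1 ≤ R₂ := by
    have h1 : (1:ℤ) ≤ (R₂:ℤ) := by
      rw [hR₂]
      have := Int.floor_nonneg.mpr (Real.sqrt_nonneg (((K:ℝ) - 1) * L * a₂ / a₁))
      linarith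
    exact_mod_cast h1
  have hS₂1 : 1 ≤ S₂ := by
    have h1 : (1:ℤ) ≤ (S₂:ℤ) := by
      rw [hS₂]
      have := Int.floor_nonneg.mpr (Real.sqrt_nonneg (((K:ℝ) - 1) * L * a₁ / a₂))
      linarith
    exact_mod_cast h1
  have hS₁1 : 1 ≤ S₁ := by
    have h1 : (1:ℤ) ≤ (S₁:ℤ) := by
      rw [hS₁]
      exact Int.le_floor.mpr (by push_cast; linarith)
    exact_mod_cast h1
  have hRcast : (R:ℝ) = 3 + (R₂:ℝ) := by
    have h1 : (R:ℤ) = 3 + (R₂:ℤ) := by omega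
    exact_mod_cast h1
  have hScast : (S:ℝ) = (S₁:ℝ) + (S₂:ℝ) - 1 := by
    have h1 : (S:ℤ) = (S₁:ℤ) + (S₂:ℤ) - 1 := by omega
    exact_mod_cast h1
  -- upper bounds for R and S
  have hR₂le : (R₂:ℝ) ≤ 1 + Real.sqrt (((K:ℝ) - 1) * L * a₂ / a₁) := by
    have h1 : ((R₂:ℤ):ℝ) = 1 + ((⌊Real.sqrt (((K:ℝ) - 1) * L * a₂ / a₁)⌋ : ℤ) : ℝ) := by
      rw [hR₂]; push_cast; ring
    push_cast at h1
    have := Int.floor_le (Real.sqrt (((K:ℝ) - 1) * L * a₂ / a₁))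
    linarith
  have hS₂le : (S₂:ℝ) ≤ 1 + Real.sqrt (((K:ℝ) - 1) * L * a₁ / a₂) := by
    have h1 : ((S₂:ℤ):ℝ) = 1 + ((⌊Real.sqrt (((K:ℝ) - 1) * L * a₁ / a₂)⌋ : ℤ) : ℝ) := by
      rw [hS₂]; push_cast; ring
    push_cast at h1
    have := Int.floor_le (Real.sqrt (((K:ℝ) - 1) * L * a₁ / a₂))
    linarith
  have hS₁le : (S₁:ℝ) ≤ (L + 3) / 4 := by
    have h1 : ((S₁:ℤ):ℝ) = ((⌊(L + 3) / 4⌋ : ℤ) : ℝ) := by rw [hS₁]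
    push_cast at h1
    have := Int.floor_le ((L + 3) / 4)
    linarith
  have hxle : (R:ℝ) * a₁ ≤ 4 * a₁ + t := by
    rw [hRcast, e1]
    have hm := mul_le_mul_of_nonneg_right hR₂le ha₁pos.le
    linarith [hm]
  have hyle : (S:ℝ) * a₂ ≤ (L + 3) * a₂ / 4 + t := by
    rw [hScast, e2]
    have hSle : (S₁:ℝ) + (S₂:ℝ) - 1 ≤ (L + 3) / 4 + Real.sqrt (((K:ℝ) - 1) * L * a₁ / a₂) := by
      linarith
    have hm := mul_le_mul_of_nonneg_right hSle ha₂pos.le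
    linarith [hm]
  -- positivity of x, y
  have hRpos : (1:ℝ) ≤ (R:ℝ) := by
    have : 1 ≤ R := by omega
    exact_mod_cast this
  have hSpos : (1:ℝ) ≤ (S:ℝ) := by
    have : 1 ≤ S := by omega
    exact_mod_cast this
  have hxpos : 0 < (R:ℝ) * a₁ := mul_pos (by linarith) ha₁pos
  have hypos : 0 < (S:ℝ) * a₂ := mul_pos (by linarith) ha₂pos
  -- N * a₁ * a₂ = t² + L * a₁ * a₂
  have hNval : N * (a₁ * a₂) = t ^ 2 + L * (a₁ * a₂) := by
    rw [hN, ht2]; ring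
  -- t ≤ √k * (L * a₁ * a₂)
  have ht_le : t ≤ Real.sqrt k * (L * a₁ * a₂) := by
    have h1 : ((K:ℝ) - 1) * L * a₂ * a₁ ≤ k * (L * a₁ * a₂) ^ 2 := by
      linarith [mul_le_mul_of_nonneg_right hKle (mul_nonneg (mul_nonneg hLpos.le ha₂pos.le) ha₁pos.le)]
    have h2 : t ≤ Real.sqrt (k * (L * a₁ * a₂) ^ 2) := by
      rw [htdef]; exact Real.sqrt_le_sqrt h1
    have h3 : Real.sqrt (k * (L * a₁ * a₂) ^ 2) = Real.sqrt k * (L * a₁ * a₂) := by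
      rw [Real.sqrt_mul hk.le, Real.sqrt_sq (by positivity)]
    linarith [h3 ▸ h2]
  -- abbreviations
  obtain ⟨x, hxdef⟩ : ∃ x, x = (R:ℝ) * a₁ := ⟨_, rfl⟩
  obtain ⟨y, hydef⟩ : ∃ y, y = (S:ℝ) * a₂ := ⟨_, rfl⟩
  obtain ⟨X, hXdef⟩ : ∃ X, X = 4 * a₁ + t := ⟨_, rfl⟩
  obtain ⟨Y, hYdef⟩ : ∃ Y, Y = (L + 3) * a₂ / 4 + t := ⟨_, rfl⟩
  rw [show (R:ℝ) * a₁ + (S:ℝ) * a₂ = x + y by rw [hxdef, hydef]]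
  have hXpos : 0 < X := by rw [hXdef]; linarith
  have hYpos : 0 < Y := by
    rw [hYdef]
    linarith [mul_pos (show (0:ℝ) < L + 3 by linarith) ha₂pos]
  have hxpos' : 0 < x := by rw [hxdef]; exact hxpos
  have hypos' : 0 < y := by rw [hydef]; exact hypos
  have hxleX : x ≤ X := by rw [hxdef, hXdef]; exact hxle
  have hyleY : y ≤ Y := by rw [hydef, hYdef]; exact hyle
  -- rewrite the LHS
  have hRne : (R:ℝ) ≠ 0 := by linarith
  have hSne : (S:ℝ) ≠ 0 := by linarith
  have hg2 : g * L * (x + y) =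
      L * ((x + y) / 4 - (t ^ 2 + L * (a₁ * a₂)) / 12 * (1 / x + 1 / y)) := by
    rw [← hNval, hg, hxdef, hydef]
    field_simp
    ring
  -- key inequality at (X, Y)
  have hkey : (X + Y) / 4 - (t ^ 2 + L * (a₁ * a₂)) / 12 * (1 / X + 1 / Y)
      < t / 3 + a₂ * L / 12 + 4 * a₁ / 3 + a₂ / 4 := by
    have e : (X + Y) / 4 - (t ^ 2 + L * (a₁ * a₂)) / 12 * (1 / X + 1 / Y)
        = (3 * X * Y * (X + Y) - (t ^ 2 + L * (a₁ * a₂)) * (X + Y)) / (12 * (X * Y)) := by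
      field_simp
      ring
    rw [e, div_lt_iff₀ (by positivity)]
    have id : (t / 3 + a₂ * L / 12 + 4 * a₁ / 3 + a₂ / 4) * (12 * (X * Y))
        - (3 * X * Y * (X + Y) - (t ^ 2 + L * (a₁ * a₂)) * (X + Y))
        = 16 * a₁ ^ 2 * Y + ((L + 3) * a₂ / 4) ^ 2 * X + L * (a₁ * a₂) * (X + Y) := by
      rw [hXdef, hYdef]; ring
    linarith [id, mul_pos (show (0:ℝ) < 16 * a₁ ^ 2 by positivity) hYpos,
      mul_nonneg (sq_nonneg ((L + 3) * a₂ / 4)) hXpos.le,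
      mul_pos (mul_pos hLpos (mul_pos ha₁pos ha₂pos)) (add_pos hXpos hYpos)]
  -- monotonicity step
  have hmono : (x + y) / 4 - (t ^ 2 + L * (a₁ * a₂)) / 12 * (1 / x + 1 / y)
      ≤ (X + Y) / 4 - (t ^ 2 + L * (a₁ * a₂)) / 12 * (1 / X + 1 / Y) := by
    have i1 : 1 / X ≤ 1 / x := one_div_le_one_div_of_le hxpos' hxleX
    have i2 : 1 / Y ≤ 1 / y := one_div_le_one_div_of_le hypos' hyleY
    have hC : 0 ≤ (t ^ 2 + L * (a₁ * a₂)) / 12 := by positivity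
    linarith [mul_le_mul_of_nonneg_left (add_le_add i1 i2) hC]
  -- finish
  calc g * L * (x + y)
      = L * ((x + y) / 4 - (t ^ 2 + L * (a₁ * a₂)) / 12 * (1 / x + 1 / y)) := hg2
    _ ≤ L * ((X + Y) / 4 - (t ^ 2 + L * (a₁ * a₂)) / 12 * (1 / X + 1 / Y)) :=
        mul_le_mul_of_nonneg_left hmono hLpos.le
    _ < L * (t / 3 + a₂ * L / 12 + 4 * a₁ / 3 + a₂ / 4) :=
        mul_lt_mul_of_pos_left hkey hLpos
    _ ≤ (Real.sqrt k / 3 + 1 / (12 * a₁)) * a₁ * a₂ * L ^ 2 + (4 / 3 * a₁ + a₂ / 4) * L := by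
        rw [show (Real.sqrt k / 3 + 1 / (12 * a₁)) * a₁ * a₂ * L ^ 2
            = Real.sqrt k * (L * a₁ * a₂) * L / 3 + a₂ * L ^ 2 / 12 by field_simp]
        linarith [mul_le_mul_of_nonneg_right ht_le hLpos.le]
end

section
/- With the setup below, one has (R₁−1)/(R₂−1) < 3/(√((K−1)L·a₂/a₁) − 1) < 0.03 and (S₁−1)/(S₂−1) < S₁/S₂ < ((1 + 3/L)/(4a₁√k))·√(K/(K−1)) < 0.044. -/
theorem log181 : Real.log 18.1 < 2.898 := by
  rw [Real.log_lt_iff_lt_exp (by norm_num)]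
  have hb := Real.exp_bound' (x := 0.102) (by norm_num) (by norm_num) (n := 4) (by norm_num)
  rw [show (4:ℕ) = 3+1 by rfl] at hb
  simp [Finset.sum_range_succ, Nat.factorial] at hb
  have h1 : Real.exp 0.102 ≤ 1.10739 := by nlinarith [hb]
  have h2 : Real.exp 2.898 * Real.exp 0.102 = Real.exp 3 := by
    rw [← Real.exp_add]; norm_num
  have h3 := Real.exp_one_gt_d9
  have hp : (0:ℝ) < Real.exp 0.102 := Real.exp_pos _
  have h4 : (20.085:ℝ) < Real.exp 3 := by
    have : (2.7182818283:ℝ)^3 < Real.exp 1 ^ 3 := by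
      apply pow_lt_pow_left₀ h3 (by norm_num)
      norm_num
    rw [Real.exp_one_pow] at this
    norm_num at this
    linarith
  by_contra hc
  push_neg at hc
  have h5 : Real.exp 2.898 * Real.exp 0.102 ≤ 18.1 * 1.10739 :=
    mul_le_mul hc h1 hp.le (by norm_num)
  rw [h2] at h5
  linarith

/-- from `a^2 ≤ b^2` and nonnegativity conclude `a ≤ b`. -/
theorem aux_sqle (a b : ℝ) (ha : 0 ≤ a) (hb : 0 ≤ b) (hab : a^2 ≤ b^2) : a ≤ b := by
  nlinarith [hab, ha, hb]

set_option maxHeartbeats 2000000 in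
theorem ratio_bounds
    (h a₂ : ℝ) (hh : 17 ≤ h) (ha₂ : 9.05 * Real.pi ≤ a₂)
    (σ lam a₁ H L₀ L v₀ v₁ v₂ k : ℝ)
    (hσ : σ = (1 + 2 * 0.59 - 0.59 ^ 2) / 2)
    (hlam : lam = σ * Real.log 18.1)
    (ha₁ : a₁ = 9.05 * Real.pi)
    (hH : H = h / lam + 1 / σ)
    (hL₀ : L₀ = H + Real.sqrt (H ^ 2 + 1 / 4))
    (hL : L = (⌊L₀⌋ : ℝ) + 1 / 2)
    (hv₀ : v₀ = 1 / (4 * a₁) + 4 / (3 * a₂) + L / (12 * a₁))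
    (hv₁ : v₁ = L / 3)
    (hv₂ : v₂ = lam * (L - H))
    (hk : 0 < k)
    (hsqrtk : Real.sqrt k = (v₁ + Real.sqrt (v₁ ^ 2 + 4 * v₀ * v₂)) / (2 * v₂))
    (K : ℕ) (hK : (K : ℤ) = 1 + ⌊k * L * a₁ * a₂⌋)
    (R₁ S₁ R₂ S₂ : ℕ) (hR₁ : R₁ = 4)
    (hS₁ : (S₁ : ℤ) = ⌊(L + 3) / 4⌋)
    (hR₂ : (R₂ : ℤ) = 1 + ⌊Real.sqrt (((K : ℝ) - 1) * L * a₂ / a₁)⌋)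
    (hS₂ : (S₂ : ℤ) = 1 + ⌊Real.sqrt (((K : ℝ) - 1) * L * a₁ / a₂)⌋)
    (R S : ℕ) (hR : R = R₁ + R₂ - 1) (hS : S = S₁ + S₂ - 1) :
    ((R₁ : ℝ) - 1) / ((R₂ : ℝ) - 1) < 3 / (Real.sqrt (((K : ℝ) - 1) * L * a₂ / a₁) - 1) ∧
      3 / (Real.sqrt (((K : ℝ) - 1) * L * a₂ / a₁) - 1) < 0.03 ∧
      ((S₁ : ℝ) - 1) / ((S₂ : ℝ) - 1) < (S₁ : ℝ) / (S₂ : ℝ) ∧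
      (S₁ : ℝ) / (S₂ : ℝ) <
        (1 + 3 / L) / (4 * a₁ * Real.sqrt k) * Real.sqrt ((K : ℝ) / ((K : ℝ) - 1)) ∧
      (1 + 3 / L) / (4 * a₁ * Real.sqrt k) * Real.sqrt ((K : ℝ) / ((K : ℝ) - 1)) < 0.044 := by
  clear hR hS
  have hpi := Real.pi_gt_d6
  have ha₁lb : (28.4314 : ℝ) ≤ a₁ := by rw [ha₁]; linarith
  have ha₁pos : (0:ℝ) < a₁ := by linarith
  have ha₂a₁ : a₁ ≤ a₂ := by rw [ha₁]; exact ha₂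
  have ha₂pos : (0:ℝ) < a₂ := by linarith
  have hσv : σ = 0.91595 := by rw [hσ]; norm_num
  have hlogpos : 0 < Real.log 18.1 := Real.log_pos (by norm_num)
  have hlampos : 0 < lam := by rw [hlam, hσv]; positivity
  have hlamub : lam < 2.6545 := by
    rw [hlam, hσv]; linarith [log181]
  -- H lower bound
  have hHlb : (7.4959 : ℝ) ≤ H := by
    rw [hH, hσv]
    have h1 : (17:ℝ)/2.6545 ≤ h / lam :=
      div_le_div₀ (by linarith) hh hlampos hlamub.le
    linarith
  clear hh hH hlam hσ hσv hlogpos ha₂ ha₁ hpi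
  -- sqrt(H^2+1/4) facts
  set s : ℝ := Real.sqrt (H ^ 2 + 1 / 4) with hs
  have hs2 : s ^ 2 = H ^ 2 + 1 / 4 := Real.sq_sqrt (by positivity)
  have hsnn : 0 ≤ s := Real.sqrt_nonneg _
  have hsgeH : H ≤ s := by
    rw [hs]
    calc H = Real.sqrt (H^2) := (Real.sqrt_sq (by linarith)).symm
      _ ≤ s := Real.sqrt_le_sqrt (by linarith)
  have hsub : s ≤ H + 1/60 := by
    rw [hs]
    calc Real.sqrt (H^2 + 1/4) ≤ Real.sqrt ((H + 1/60)^2) :=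
          Real.sqrt_le_sqrt (by nlinarith [hHlb])
      _ = H + 1/60 := Real.sqrt_sq (by linarith)
  -- L₀ > 15
  have hL₀gt : (15:ℝ) < L₀ := by
    rw [hL₀]
    nlinarith [hs2, hsnn, hsgeH, hHlb]
  -- floors of L₀
  have hfl1' : (15:ℝ) ≤ (⌊L₀⌋:ℝ) := by
    exact_mod_cast Int.le_floor.mpr (by exact_mod_cast hL₀gt.le)
  have hL15 : (15.5:ℝ) ≤ L := by rw [hL]; linarith
  have hLpos : (0:ℝ) < L := by linarith
  have hfl2 : (⌊L₀⌋:ℝ) ≤ L₀ := Int.floor_le _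
  have hfl3 : L₀ < (⌊L₀⌋:ℝ) + 1 := Int.lt_floor_add_one _
  -- L - H bounds
  have hLH_lb : H + 6.9 ≤ L := by rw [hL]; linarith [hfl3, hL₀, hsgeH, hHlb]
  have hLH_ub : 2 * (L - H) ≤ L + 0.52 := by
    rw [hL]; linarith [hfl2, hL₀, hsub]
  clear hfl2 hfl3 hfl1' hL₀gt hL hL₀ hsub hs hs2 hsnn hsgeH
  -- v's
  have hv₂pos : 0 < v₂ := by rw [hv₂]; exact mul_pos hlampos (by linarith)
  have hv₂ub : 2 * v₂ ≤ lam * (L + 0.52) := by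
    rw [hv₂]
    have h2 := mul_le_mul_of_nonneg_left hLH_ub hlampos.le
    linarith [h2]
  have hv₀pos : 0 < v₀ := by rw [hv₀]; positivity
  have hv₁pos : 0 < v₁ := by rw [hv₁]; positivity
  -- sqrt k lower bound
  have hskpos : 0 < Real.sqrt k := Real.sqrt_pos.mpr hk
  have hsklb : v₁ / v₂ ≤ Real.sqrt k := by
    rw [hsqrtk]
    have h1 : v₁ ≤ Real.sqrt (v₁ ^ 2 + 4 * v₀ * v₂) := by
      calc v₁ = Real.sqrt (v₁ ^ 2) := (Real.sqrt_sq hv₁pos.le).symm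
        _ ≤ _ := Real.sqrt_le_sqrt (by nlinarith [mul_pos hv₀pos hv₂pos])
    rw [div_le_div_iff₀ hv₂pos (by positivity)]
    have h2 := mul_le_mul_of_nonneg_right h1 hv₂pos.le
    linarith [h2]
  have hsk : (0.2429:ℝ) ≤ Real.sqrt k := by
    refine le_trans ?_ hsklb
    rw [le_div_iff₀ hv₂pos, hv₁]
    have hmono : lam * (L + 0.52) ≤ 2.6545 * (L + 0.52) :=
      mul_le_mul_of_nonneg_right hlamub.le (by linarith)
    linarith [hv₂ub, hmono, hL15]
  have hk059 : (0.059:ℝ) ≤ k := by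
    have h1 : (0.2429:ℝ)*0.2429 ≤ Real.sqrt k * Real.sqrt k :=
      mul_le_mul hsk hsk (by norm_num) (by linarith)
    have h2 := Real.mul_self_sqrt hk.le
    linarith
  clear hsklb hsqrtk hv₀pos hv₁pos hv₂ub hv₂pos hv₀ hv₁ hv₂ hlamub hlampos hLH_lb hLH_ub hHlb
  -- K bounds
  have ha11 : (808.34:ℝ) ≤ a₁ * a₁ := by
    have := mul_le_mul ha₁lb ha₁lb (by norm_num) (by linarith : (0:ℝ) ≤ a₁)
    linarith
  have hprod : (739:ℝ) ≤ k * L * a₁ * a₂ := by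
    have h1 : (0.9145:ℝ) ≤ k * L := by
      have := mul_le_mul hk059 hL15 (by norm_num) (by linarith)
      linarith
    have h2 : (808.34:ℝ) ≤ a₁ * a₂ := by
      have := mul_le_mul ha₁lb (le_trans ha₁lb ha₂a₁) (by norm_num) (by linarith)
      linarith
    have h3 := mul_le_mul h1 h2 (by norm_num : (0:ℝ) ≤ 808.34) (by positivity)
    nlinarith [h3]
  have hK740' : (740:ℝ) ≤ (K:ℝ) := by
    have h740 : (740:ℤ) ≤ (K:ℤ) := by
      rw [hK]
      have : (739:ℤ) ≤ ⌊k * L * a₁ * a₂⌋ := Int.le_floor.mpr (by exact_mod_cast hprod)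
      linarith
    exact_mod_cast h740
  have hKm1pos : (0:ℝ) < (K:ℝ) - 1 := by linarith
  have hKgt : k * L * a₁ * a₂ < (K:ℝ) := by
    have h1 : ((K:ℤ):ℝ) = 1 + (⌊k * L * a₁ * a₂⌋:ℝ) := by exact_mod_cast hK
    push_cast at h1
    have := Int.lt_floor_add_one (k * L * a₁ * a₂)
    linarith
  clear hK hprod
  -- x and its bounds
  set x : ℝ := Real.sqrt (((K : ℝ) - 1) * L * a₂ / a₁) with hxdef
  have hxnn : 0 ≤ x := Real.sqrt_nonneg _
  have hx2 : x ^ 2 = ((K : ℝ) - 1) * L * a₂ / a₁ := Real.sq_sqrt (by positivity)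
  have hx2' : x ^ 2 * a₁ = ((K : ℝ) - 1) * L * a₂ := by
    rw [hx2]; field_simp
  have hxlb : (102:ℝ) ≤ x := by
    have h0 : (11454:ℝ) ≤ ((K:ℝ)-1) * L := by
      have := mul_le_mul (by linarith : (739:ℝ) ≤ (K:ℝ)-1) hL15 (by norm_num) (by linarith)
      linarith
    have h1 : (11454:ℝ) * a₂ ≤ ((K:ℝ)-1) * L * a₂ := mul_le_mul_of_nonneg_right h0 ha₂pos.le
    have h3 : (11454:ℝ) ≤ x^2 :=
      le_of_mul_le_mul_right (by linarith [hx2', h1, mul_le_mul_of_nonneg_left ha₂a₁ (by norm_num : (0:ℝ) ≤ 11454)]) ha₁pos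
    exact aux_sqle 102 x (by norm_num) hxnn (by nlinarith)
  -- R₂ facts
  have hR₂ℝ : (R₂:ℝ) = 1 + (⌊x⌋:ℝ) := by exact_mod_cast hR₂
  have hfloorx_gt : x - 1 < (⌊x⌋:ℝ) := by
    have := Int.lt_floor_add_one x; linarith
  -- y and its bounds
  set y : ℝ := Real.sqrt (((K : ℝ) - 1) * L * a₁ / a₂) with hydef
  have hynn : 0 ≤ y := Real.sqrt_nonneg _
  have hy2 : y ^ 2 = ((K : ℝ) - 1) * L * a₁ / a₂ := Real.sq_sqrt (by positivity)
  have hy2' : y ^ 2 * a₂ = ((K : ℝ) - 1) * L * a₁ := by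
    rw [hy2]; field_simp
  have hylb : L ≤ y := by
    have h6 : (47:ℝ) ≤ k * a₁ * a₁ := by
      have := mul_le_mul hk059 ha11 (by norm_num) (by linarith)
      nlinarith [this]
    have h5 : (k * L * a₁ * a₂ - 1) * (L * a₁) ≤ ((K:ℝ) - 1) * (L * a₁) :=
      mul_le_mul_of_nonneg_right (by linarith) (by positivity)
    have h7 : (0:ℝ) ≤ (k * a₁ * a₁ - 47) * (L * (L * a₂)) :=
      mul_nonneg (by linarith) (by positivity)
    have h9 : L * a₁ ≤ L * a₂ := mul_le_mul_of_nonneg_left ha₂a₁ hLpos.le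
    have h8 : (0:ℝ) ≤ (46 * L - 1) * (L * a₂) :=
      mul_nonneg (by linarith) (by positivity)
    have hq : L^2 * a₂ ≤ y^2 * a₂ := by linarith [hy2', h5, h7, h8, h9]
    have hq2 : L^2 ≤ y^2 := le_of_mul_le_mul_right hq ha₂pos
    exact aux_sqle L y hLpos.le hynn hq2
  -- S₁, S₂ facts
  have hS₁ℝ : (S₁:ℝ) = (⌊(L + 3) / 4⌋:ℝ) := by exact_mod_cast hS₁
  have hS₁ub : (S₁:ℝ) ≤ (L + 3) / 4 := by rw [hS₁ℝ]; exact Int.floor_le _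
  have hS₁lb : (4:ℝ) ≤ (S₁:ℝ) := by
    rw [hS₁ℝ]
    have h4 : (4:ℤ) ≤ ⌊(L + 3) / 4⌋ := Int.le_floor.mpr (by push_cast; linarith)
    exact_mod_cast h4
  have hS₂ℝ : (S₂:ℝ) = 1 + (⌊y⌋:ℝ) := by exact_mod_cast hS₂
  have hS₂gty : y < (S₂:ℝ) := by
    rw [hS₂ℝ]
    have := Int.lt_floor_add_one y; linarith
  have hS₂pos : (0:ℝ) < (S₂:ℝ) := by linarith
  have hS₁ltS₂ : (S₁:ℝ) < (S₂:ℝ) := by linarith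
  -- w bounds
  set w : ℝ := Real.sqrt ((K : ℝ) / ((K : ℝ) - 1)) with hwdef
  have hwnn : 0 ≤ w := Real.sqrt_nonneg _
  have hw2 : w ^ 2 = (K : ℝ) / ((K : ℝ) - 1) := Real.sq_sqrt (by positivity)
  have hw2' : w ^ 2 * ((K:ℝ) - 1) = (K:ℝ) := by rw [hw2]; field_simp
  have hwub : w ≤ 1.0007 := by
    rw [hwdef, Real.sqrt_le_left (by norm_num), div_le_iff₀ hKm1pos]
    nlinarith [hK740']
  have hwlb : 1 ≤ w := by
    rw [hwdef, Real.le_sqrt (by norm_num) (by positivity), one_pow, le_div_iff₀ hKm1pos]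
    linarith
  have hwpos : (0:ℝ) < w := by linarith
  refine ⟨?_, ?_, ?_, ?_, ?_⟩
  · -- (R₁-1)/(R₂-1) < 3/(x-1)
    have hx1 : (0:ℝ) < x - 1 := by linarith
    have hR₂1 : x - 1 < (R₂:ℝ) - 1 := by rw [hR₂ℝ]; linarith
    rw [hR₁]
    norm_num
    exact div_lt_div_of_pos_left (by norm_num) hx1 hR₂1
  · rw [div_lt_iff₀ (by linarith : (0:ℝ) < x - 1)]
    linarith
  · -- (S₁-1)/(S₂-1) < S₁/S₂
    rw [div_lt_div_iff₀ (by linarith) hS₂pos]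
    have e1 : ((S₁:ℝ) - 1) * (S₂:ℝ) = (S₁:ℝ)*(S₂:ℝ) - (S₂:ℝ) := by ring
    have e2 : (S₁:ℝ) * ((S₂:ℝ) - 1) = (S₁:ℝ)*(S₂:ℝ) - (S₁:ℝ) := by ring
    linarith [e1, e2, hS₁ltS₂]
  · -- S₁/S₂ < (1+3/L)/(4 a₁ √k) * w
    have hkey : L * (a₁ * Real.sqrt k) ≤ y * w := by
      have hsq : (L * (a₁ * Real.sqrt k))^2 * (a₂ * ((K:ℝ)-1)) ≤ (y * w)^2 * (a₂ * ((K:ℝ)-1)) := by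
        have e1 : (L * (a₁ * Real.sqrt k))^2 * (a₂ * ((K:ℝ)-1))
            = (k * L * a₁ * a₂) * (L * a₁ * ((K:ℝ)-1)) := by
          rw [mul_pow, mul_pow, Real.sq_sqrt hk.le]; ring
        have e2 : (y * w)^2 * (a₂ * ((K:ℝ)-1)) = (y^2 * a₂) * (w^2 * ((K:ℝ)-1)) := by ring
        rw [e1, e2, hy2', hw2']
        have h5 : (k * L * a₁ * a₂) * (L * a₁ * ((K:ℝ)-1)) ≤ (K:ℝ) * (L * a₁ * ((K:ℝ)-1)) :=
          mul_le_mul_of_nonneg_right hKgt.le (by positivity)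
        linarith [h5]
      have hsq2 : (L * (a₁ * Real.sqrt k))^2 ≤ (y * w)^2 :=
        le_of_mul_le_mul_right hsq (by positivity)
      exact aux_sqle _ _ (by positivity) (by positivity) hsq2
    have hT : (1 + 3 / L) / (4 * a₁ * Real.sqrt k) * w
        = (L + 3) * w / (4 * (L * (a₁ * Real.sqrt k))) := by
      field_simp
    rw [hT, div_lt_div_iff₀ hS₂pos (by positivity)]
    have c1 : (S₁:ℝ) * (4 * (L * (a₁ * Real.sqrt k))) ≤ (L + 3) * (L * (a₁ * Real.sqrt k)) := by
      have h41 : 4 * (S₁:ℝ) ≤ L + 3 := by linarith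
      have := mul_le_mul_of_nonneg_right h41
        (by positivity : (0:ℝ) ≤ L * (a₁ * Real.sqrt k))
      linarith [this]
    have c2 : (L + 3) * (L * (a₁ * Real.sqrt k)) ≤ (L + 3) * (y * w) :=
      mul_le_mul_of_nonneg_left hkey (by linarith)
    have c3 : (L + 3) * (y * w) < (L + 3) * ((S₂:ℝ) * w) := by
      have h6 : y * w < (S₂:ℝ) * w := mul_lt_mul_of_pos_right hS₂gty hwpos
      exact mul_lt_mul_of_pos_left h6 (by linarith)
    linarith [c1, c2, c3]
  · -- final numeric bound
    have hm : (28.4314:ℝ)*0.2429 ≤ a₁ * Real.sqrt k :=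
      mul_le_mul ha₁lb hsk (by norm_num) (by linarith)
    have hden : (27.62:ℝ) ≤ 4 * a₁ * Real.sqrt k := by
      have : 4 * a₁ * Real.sqrt k = 4 * (a₁ * Real.sqrt k) := by ring
      rw [this]; linarith
    have hnum : 1 + 3 / L ≤ (1.1936:ℝ) := by
      have h30 : 3 / L ≤ 0.1936 := by
        rw [div_le_iff₀ hLpos]; linarith
      linarith
    have h1 : (1 + 3 / L) / (4 * a₁ * Real.sqrt k) ≤ 1.1936 / 27.62 :=
      div_le_div₀ (by norm_num) hnum (by norm_num) hden
    have h2 : (1 + 3 / L) / (4 * a₁ * Real.sqrt k) * w ≤ (1.1936 / 27.62) * 1.0007 :=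
      mul_le_mul h1 hwub hwnn (by norm_num)
    calc (1 + 3 / L) / (4 * a₁ * Real.sqrt k) * w ≤ (1.1936 / 27.62) * 1.0007 := h2
      _ < 0.044 := by norm_num
end

section
/- Define f₁(x) = (1/2)·log(x/(x−1)) + log x/(6x(x−1)) + log(x/(x−1))/(x−1) for real x > 1. Then for every real x ≥ 600 one has f₁(x) < 0.00084. -/
/-- `f₁(x) = (1/2)·log(x/(x−1)) + log x/(6x(x−1)) + log(x/(x−1))/(x−1)`. -/
noncomputable def f₁ (x : ℝ) : ℝ :=
  1 / 2 * Real.log (x / (x - 1)) + Real.log x / (6 * x * (x - 1)) +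
    Real.log (x / (x - 1)) / (x - 1)

/-- For every real `x ≥ 600` one has `f₁(x) < 0.00084`. -/
theorem f₁_bound : ∀ x : ℝ, 600 ≤ x → f₁ x < 0.00084 := by
  intro x hx
  have hx0 : (0:ℝ) < x := by linarith
  have hx1 : (0:ℝ) < x - 1 := by linarith
  -- Taylor bound for log(x/(x-1)) = -log(1 - 1/x)
  have hs : |1/x| < 1 := by
    rw [abs_of_pos (by positivity)]
    rw [div_lt_one hx0]; linarith
  have key := Real.abs_log_sub_add_sum_range_le hs 2
  simp only [Finset.sum_range_succ, Finset.sum_range_zero] at key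
  have h1ms : 1 - 1/x = (x-1)/x := by field_simp
  have hlogeq : Real.log (1 - 1/x) = - Real.log (x/(x-1)) := by
    rw [h1ms, ← Real.log_inv]
    congr 1
    field_simp
  rw [hlogeq] at key
  have herr : |1/x| ^ (2+1) / (1 - |1/x|) = 1/(x^2*(x-1)) := by
    rw [abs_of_pos (by positivity : (0:ℝ) < 1/x), h1ms]
    field_simp
    ring_nf
    rw [← mul_pow, mul_inv_cancel₀ hx0.ne', one_pow]
  rw [herr] at key
  have hlog1 : Real.log (x/(x-1)) ≤ 1/x + 1/(2*x^2) + 1/(x^2*(x-1)) := by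
    have h := (abs_le.1 key).1
    norm_num at h
    have e1 : ((x^2)⁻¹/2 : ℝ) = 1/(2*x^2) := by ring
    have e2 : (x⁻¹ : ℝ) = 1/x := by ring
    have e3 : ((x-1)⁻¹*(x^2)⁻¹ : ℝ) = 1/(x^2*(x-1)) := by
      rw [one_div, mul_inv, mul_comm]
    linarith [h, e1, e2, e3]
  -- numerical bound A
  have hA : Real.log (x/(x-1)) ≤ 1/600 + 1/720000 + 1/215640000 := by
    refine hlog1.trans ?_
    gcongr <;> nlinarith
  have hApos : (0:ℝ) ≤ 1/600 + 1/720000 + 1/215640000 := by norm_num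
  -- log 600 < 6.4
  have h600 : Real.log 600 ≤ 6.4 := by
    have h5 : (600:ℝ)^5 < Real.exp 32 := by
      have h1 : (2.7182818283:ℝ)^32 ≤ (Real.exp 1)^32 :=
        pow_le_pow_left₀ (by norm_num) Real.exp_one_gt_d9.le 32
      have h2 : ((Real.exp 1)^32 : ℝ) = Real.exp 32 := by
        rw [← Real.exp_nat_mul]; norm_num
      nlinarith [h1, h2]
    have : (600:ℝ) < Real.exp (32/5) := by
      have hp : Real.exp (32/5) ^ 5 = Real.exp 32 := by
        rw [← Real.exp_nat_mul]; norm_num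
      by_contra hcon
      push_neg at hcon
      have : Real.exp 32 ≤ (600:ℝ)^5 := by
        rw [← hp]
        gcongr
      linarith
    have := (Real.log_lt_iff_lt_exp (by norm_num : (0:ℝ) < 600)).2 this
    linarith
  -- log x ≤ x/600 + 5.4
  have hlogx : Real.log x ≤ x/600 + 5.4 := by
    have hd : Real.log (x/600) ≤ x/600 - 1 := by
      have := Real.log_le_sub_one_of_pos (by positivity : (0:ℝ) < x/600)
      linarith
    have : Real.log (x/600) = Real.log x - Real.log 600 := by
      rw [Real.log_div hx0.ne' (by norm_num)]
    linarith
  -- second term bound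
  have hden : (0:ℝ) < 6*x*(x-1) := by positivity
  have h2 : Real.log x / (6*x*(x-1)) ≤ (x/600 + 5.4) / (6*x*(x-1)) := by
    gcongr
  have h2' : (x/600 + 5.4) / (6*x*(x-1)) ≤ 3840/1293840000 := by
    rw [div_le_div_iff₀ hden (by norm_num)]
    nlinarith [mul_nonneg (by linarith : (0:ℝ) ≤ x - 600) (by linarith : (0:ℝ) ≤ 3840*x + 1940760)]
  -- third term bound
  have h3 : Real.log (x/(x-1)) / (x-1) ≤ (1/600 + 1/720000 + 1/215640000) / 599 := by
    exact div_le_div₀ hApos hA (by norm_num) (by linarith)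
  -- combine
  have hf : f₁ x ≤ 1/2 * (1/600 + 1/720000 + 1/215640000) + 3840/1293840000
      + (1/600 + 1/720000 + 1/215640000) / 599 := by
    unfold f₁
    have := h2.trans h2'
    nlinarith [hA]
  refine hf.trans_lt ?_
  norm_num
end
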